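/- arXiv:2106.10145 — 6 statements merged into one kernel-verified Lean document; each statement's English description precedes it below -/
import Mathlib

section
/- Let q be an odd prime with q ≠ 3. Then there are no integers m ≥ 2 and n ≥ 1 with q^m = 2^n + 1. -/
/-!
For even `m = 2k`, `(q^k - 1)(q^k + 1) = 2^n` makes `q^k - 1` and `q^k + 1` powers of two that
differ by `2`, forcing `q^k = 3`. For odd `m`, `q^m - 1 = (q - 1)(1 + q + ⋯ + q^(m-1))`, and the
second factor is odd (`m` odd terms), so dividing `2^n` it must be `1`, i.e. `q^m = q`.
-/

theorem Nat.eq_two_of_mul_add_two_eq_two_pow {x n : ℕ} (h : x * (x + 2) = 2 ^ n) : x = 2 := by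
  obtain ⟨a, -, rfl⟩ := (Nat.dvd_prime_pow Nat.prime_two).mp (Dvd.intro _ h)
  obtain ⟨b, -, hb⟩ := (Nat.dvd_prime_pow Nat.prime_two).mp (Dvd.intro_left _ h)
  rcases a with _ | _ | a <;> rcases b with _ | _ | b <;> grind [pow_succ]

theorem Nat.eq_three_of_sq_eq_two_pow_add_one {x n : ℕ} (h : x ^ 2 = 2 ^ n + 1) : x = 3 := by
  obtain ⟨y, rfl⟩ : ∃ y, x = y + 1 := Nat.exists_eq_add_one.mpr (by grind)
  have hy : y * (y + 2) = 2 ^ n := by grind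
  grind [Nat.eq_two_of_mul_add_two_eq_two_pow hy]

theorem Nat.odd_geom_sum {q m : ℕ} (hq : Odd q) (hm : Odd m) :
    Odd (∑ i ∈ Finset.range m, q ^ i) := by
  rw [Finset.odd_sum_iff_odd_card_odd, Finset.filter_true_of_mem fun i _ ↦ hq.pow,
    Finset.card_range]
  exact hm

theorem Nat.pow_ne_two_pow_add_one_of_odd {q m n : ℕ} (hq : Odd q) (hm : Odd m) (hm1 : m ≠ 1) :
    q ^ m ≠ 2 ^ n + 1 := by
  intro h
  have hS : (∑ i ∈ Finset.range m, q ^ i) * (q - 1) = 2 ^ n := by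
    rw [geom_sum_mul_of_one_le hq.pos, h, Nat.add_sub_cancel]
  have hS1 : ∑ i ∈ Finset.range m, q ^ i = 1 :=
    ((Nat.odd_geom_sum hq hm).coprime_two_right.pow_right n).eq_one_of_dvd (Dvd.intro _ hS)
  rw [hS1, one_mul] at hS
  have hq1 : 1 < q := by grind [Nat.one_lt_two_pow_iff]
  exact hm1 ((Nat.pow_eq_self_iff hq1).mp (by omega))

theorem Nat.eq_three_of_pow_eq_two_pow_add_one {q m n : ℕ} (hm : 2 ≤ m) (hn : n ≠ 0)
    (h : q ^ m = 2 ^ n + 1) : q = 3 := by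
  have hq : Odd q :=
    (Nat.odd_pow_iff (by omega)).mp (h ▸ (Nat.even_pow.mpr ⟨even_two, hn⟩).add_one)
  rcases m.even_or_odd with ⟨k, rfl⟩ | hm_odd
  · have hk : (q ^ k) ^ 2 = 2 ^ n + 1 := by rw [← pow_mul, mul_two]; exact h
    exact ((Nat.prime_three.pow_eq_iff).mp (Nat.eq_three_of_sq_eq_two_pow_add_one hk)).1
  · exact absurd h (Nat.pow_ne_two_pow_add_one_of_odd hq hm_odd (by omega))

theorem no_fermat_catalan_general (q : ℕ) (hq3 : q ≠ 3) :
    ¬ ∃ m n : ℕ, 2 ≤ m ∧ 1 ≤ n ∧ q ^ m = 2 ^ n + 1 := by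
  rintro ⟨m, n, hm, hn, h⟩
  exact hq3 (Nat.eq_three_of_pow_eq_two_pow_add_one hm (by omega) h)

theorem no_fermat_catalan (q : ℕ) (hq : q.Prime) (hodd : Odd q) (hq3 : q ≠ 3) :
    ¬ ∃ m n : ℕ, 2 ≤ m ∧ 1 ≤ n ∧ q ^ m = 2 ^ n + 1 :=
  no_fermat_catalan_general q hq3
end

section
/- Let q be an odd prime. If q^m = 2^n + 1 with m ≥ 2 and n ≥ 1, then q = 3, m = 2 and n = 3. -/
/-!
Writing `q = r + 1`, the geometric sum `S = 1 + q + ⋯ + q^(m-1)` satisfies `S * r = 2^n`, so `S` is a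
power of two; since `m ≥ 2` it is at least `2`, hence even, and as a sum of `m` odd terms this forces
`m = 2k`. Then `x = q^k` solves `(x - 1)(x + 1) = 2^n`, two powers of two at distance `2`, so `x = 3`,
which gives `q = 3`, `k = 1` and `n = 3`.
-/

open Finset

namespace Nat

theorem even_geom_sum_iff {x : ℕ} (hx : Odd x) (m : ℕ) :
    Even (∑ i ∈ range m, x ^ i) ↔ Even m := by
  induction m with
  | zero => simp
  | succ m ih => simp [sum_range_succ, Nat.even_add, ih, Nat.even_pow, Nat.not_even_iff_odd.mpr hx]

theorem two_pow_eq_two_pow_add_two_iff {a b : ℕ} : 2 ^ b = 2 ^ a + 2 ↔ a = 1 ∧ b = 2 := by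
  refine ⟨fun h ↦ ?_, by rintro ⟨rfl, rfl⟩; rfl⟩
  rcases b with _ | _ | b <;> rcases a with _ | _ | a <;> simp [pow_succ, mul_assoc] at h ⊢ <;> omega

theorem sq_eq_two_pow_add_one_iff {x n : ℕ} : x ^ 2 = 2 ^ n + 1 ↔ x = 3 ∧ n = 3 := by
  refine ⟨fun h ↦ ?_, by rintro ⟨rfl, rfl⟩; rfl⟩
  have hx : x ≠ 0 := by rintro rfl; simp at h
  obtain ⟨y, rfl⟩ : ∃ y, x = y + 1 := ⟨x - 1, by omega⟩
  have hfac : y * (y + 2) = 2 ^ n := by linarith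
  obtain ⟨a, -, ha⟩ := (Nat.dvd_prime_pow Nat.prime_two).mp (Dvd.intro _ hfac)
  obtain ⟨b, -, hb⟩ := (Nat.dvd_prime_pow Nat.prime_two).mp (Dvd.intro_left _ hfac)
  obtain ⟨rfl, -⟩ := two_pow_eq_two_pow_add_two_iff.mp (by omega : 2 ^ b = 2 ^ a + 2)
  obtain rfl : y = 2 := ha
  exact ⟨rfl, Nat.pow_right_injective le_rfl (by simpa using hfac.symm)⟩

theorem even_of_pow_eq_two_pow_add_one {q m n : ℕ} (hq : Odd q) (hm : 2 ≤ m)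
    (h : q ^ m = 2 ^ n + 1) : Even m := by
  obtain ⟨r, rfl⟩ : ∃ r, q = r + 1 := ⟨q - 1, by have := hq.pos; omega⟩
  have hS : (∑ i ∈ range m, (r + 1) ^ i) * r = 2 ^ n := by
    have := geom_sum_mul_add r m
    omega
  have hS_ge : 2 ≤ ∑ i ∈ range m, (r + 1) ^ i :=
    calc 2 ≤ ∑ i ∈ range 2, (r + 1) ^ i := by simp [sum_range_succ]; omega
      _ ≤ _ := sum_le_sum_of_subset (range_subset_range.mpr hm)
  obtain ⟨j, -, hj⟩ := (Nat.dvd_prime_pow Nat.prime_two).mp (Dvd.intro _ hS)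
  rw [← even_geom_sum_iff hq, hj]
  exact (Nat.even_pow' (by rintro rfl; simp [hj] at hS_ge)).mpr even_two

end Nat

theorem fermat_catalan_classification_general (q m n : ℕ) (hodd : Odd q)
    (hm : 2 ≤ m) (h : q ^ m = 2 ^ n + 1) :
    q = 3 ∧ m = 2 ∧ n = 3 := by
  obtain ⟨k, rfl⟩ := Nat.even_of_pow_eq_two_pow_add_one hodd hm h
  obtain ⟨hk3, rfl⟩ := Nat.sq_eq_two_pow_add_one_iff.mp
    (by rwa [← pow_mul, mul_two] : (q ^ k) ^ 2 = 2 ^ n + 1)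
  obtain ⟨rfl, rfl⟩ := (Nat.Prime.pow_eq_iff Nat.prime_three).mp hk3
  exact ⟨rfl, rfl, rfl⟩

theorem fermat_catalan_classification (q m n : ℕ) (hq : q.Prime) (hodd : Odd q)
    (hm : 2 ≤ m) (hn : 1 ≤ n) (h : q ^ m = 2 ^ n + 1) :
    q = 3 ∧ m = 2 ∧ n = 3 :=
  fermat_catalan_classification_general q m n hodd hm h
end

section
/- Let q be an odd prime. Then there are no integers m ≥ 2 and n ≥ 1 with q^m = 2^n - 1. -/
/-!
Write `q ^ m + 1 = 2 ^ n`. If `m = 2k` is even, `q ^ m` is an odd square, hence `1` mod `4`, so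
`2 ^ n ≡ 2 [MOD 4]` forces `n = 1` and `q ^ m = 1`. If `m` is odd, `q ^ m + 1 = (q + 1) S` with
`S = ∑_{i<m} (-q)^i`, a sum of an odd number of odd terms; an odd positive divisor of `2 ^ n` is `1`,
so `q ^ m = q`. Either way `q ^ m ≤ q`, which is impossible for `q ≥ 2` and `m ≥ 2`.
-/

namespace Int

lemma odd_geom_sum {x : ℤ} {m : ℕ} (hx : Odd x) (hm : Odd m) :
    Odd (∑ i ∈ Finset.range m, x ^ i) := by
  have hsum : ∑ i ∈ Finset.range m, x ^ i ≡ m [ZMOD 2] :=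
    calc ∑ i ∈ Finset.range m, x ^ i ≡ ∑ i ∈ Finset.range m, (1 : ℤ) ^ i [ZMOD 2] :=
          ModEq.sum fun i _ => ModEq.pow i (odd_iff.mp hx)
      _ = m := by simp
  exact odd_iff.mpr (hsum.eq.trans (odd_iff.mp (by exact_mod_cast hm)))

lemma eq_one_of_odd_of_dvd_two_pow {d : ℤ} {n : ℕ} (hd : Odd d) (hpos : 0 < d)
    (h : d ∣ 2 ^ n) : d = 1 := by
  have h2 : ¬ 2 ∣ d := by rwa [← even_iff_two_dvd, not_even_iff_odd]
  have hco : IsCoprime d (2 ^ n) := (prime_two.coprime_iff_not_dvd.mpr h2).symm.pow_right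
  rcases isUnit_iff.mp (hco.isUnit_of_dvd' dvd_rfl h) with h1 | h1 <;> omega

lemma sq_eq_one_of_sq_add_one_eq_two_pow {a : ℤ} {n : ℕ} (ha : Odd a)
    (h : a ^ 2 + 1 = 2 ^ n) : a ^ 2 = 1 := by
  have hsq := sq_mod_four_eq_one_of_odd ha
  have hn : n < 2 := by
    by_contra! hn
    have h4 : (2 : ℤ) ^ 2 ∣ 2 ^ n := pow_dvd_pow 2 hn
    omega
  interval_cases n <;> omega

lemma pow_eq_self_of_pow_add_one_eq_two_pow {x : ℤ} {m n : ℕ} (hx : Odd x) (hm : Odd m)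
    (h : x ^ m + 1 = 2 ^ n) : x ^ m = x := by
  set S := ∑ i ∈ Finset.range m, (-x) ^ i
  have hfac : S * (x + 1) = x ^ m + 1 := by
    have := geom_sum_mul (-x) m
    rw [hm.neg_pow] at this
    linarith
  have hS : S = 1 :=
    eq_one_of_odd_of_dvd_two_pow (odd_geom_sum hx.neg hm) hm.geom_sum_pos
      ⟨x + 1, by rw [← h, ← hfac]⟩
  rw [hS] at hfac
  linarith

lemma pow_eq_one_or_self_of_pow_add_one_eq_two_pow {x : ℤ} {m n : ℕ} (hx : Odd x)
    (h : x ^ m + 1 = 2 ^ n) : x ^ m = 1 ∨ x ^ m = x := by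
  rcases Nat.even_or_odd m with ⟨k, rfl⟩ | hm
  · rw [← two_mul, pow_mul'] at h ⊢
    exact Or.inl (sq_eq_one_of_sq_add_one_eq_two_pow hx.pow h)
  · exact Or.inr (pow_eq_self_of_pow_add_one_eq_two_pow hx hm h)

end Int

theorem no_mersenne_catalan (q : ℕ) (hq : q.Prime) (hodd : Odd q) :
    ¬ ∃ m n : ℕ, 2 ≤ m ∧ 1 ≤ n ∧ (q : ℤ) ^ m = 2 ^ n - 1 := by
  rintro ⟨m, n, hm, -, h⟩
  have hq1 : (1 : ℤ) < q := by exact_mod_cast hq.one_lt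
  have hlt : (q : ℤ) < q ^ m := by simpa using pow_lt_pow_right₀ hq1 hm
  rcases Int.pow_eq_one_or_self_of_pow_add_one_eq_two_pow (x := q) (by exact_mod_cast hodd)
    (by linarith) with h1 | h1 <;> linarith
end

section
/- Let q be an odd prime and n ≥ 2 an integer. If q^m + 1 = 2^n for some m ≥ 1, then q has multiplicative order 2 modulo 2^n, i.e., q^2 ≡ 1 mod 2^n. -/
open scoped Nat

theorem Nat.odd_of_four_dvd_pow_add_one {q m : ℕ} (hq : Odd q) (h : 4 ∣ q ^ m + 1) : Odd m := by
  by_contra hm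
  obtain ⟨t, rfl⟩ := Nat.not_odd_iff_even.mp hm
  obtain ⟨a, ha⟩ := hq.pow (n := t)
  have hsq : q ^ (t + t) = 4 * (a * a + a) + 1 := by rw [← two_mul, pow_mul', ha]; ring
  omega

theorem ZMod.orderOf_natCast_dvd_totient {q n : ℕ} (h : q.Coprime n) :
    orderOf (q : ZMod n) ∣ φ n :=
  orderOf_dvd_of_pow_eq_one <| by
    exact_mod_cast (ZMod.natCast_eq_natCast_iff _ _ _).mpr (Nat.ModEq.pow_totient h)

theorem Nat.totient_two_pow_dvd (n : ℕ) : φ (2 ^ n) ∣ 2 ^ n := by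
  cases n with
  | zero => simp
  | succ k =>
    rw [Nat.totient_prime_pow_succ Nat.prime_two, Nat.add_one_sub_one, mul_one]
    exact pow_dvd_pow 2 k.le_succ

/-- Odd powers are automorphisms of the 2-group `(ZMod (2 ^ n))ˣ`, so they preserve orders. -/
theorem ZMod.orderOf_natCast_pow_of_odd {q m n : ℕ} (hq : Odd q) (hm : Odd m) :
    orderOf ((q : ZMod (2 ^ n)) ^ m) = orderOf (q : ZMod (2 ^ n)) := by
  have hdvd : orderOf (q : ZMod (2 ^ n)) ∣ 2 ^ n :=
    (ZMod.orderOf_natCast_dvd_totient (hq.coprime_two_right.pow_right n)).trans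
      (Nat.totient_two_pow_dvd n)
  exact Nat.Coprime.orderOf_pow <|
    Nat.Coprime.coprime_dvd_left hdvd (Nat.Coprime.pow_left n (Nat.coprime_two_left.mpr hm))

theorem order_two_of_mersenne_power_general (q m n : ℕ) (hodd : Odd q)
    (hn : 2 ≤ n) (h : q ^ m + 1 = 2 ^ n) :
    orderOf (q : ZMod (2 ^ n)) = 2 ∧ q ^ 2 ≡ 1 [MOD 2 ^ n] := by
  have hm : Odd m := Nat.odd_of_four_dvd_pow_add_one hodd (h ▸ Nat.pow_dvd_pow 2 hn)
  have h2n : 2 < 2 ^ n := lt_of_lt_of_le (by norm_num) (Nat.pow_le_pow_right two_pos hn)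
  have : Fact (1 < 2 ^ n) := ⟨by omega⟩
  have hneg : (q : ZMod (2 ^ n)) ^ m = -1 := by
    have hzero : ((q ^ m + 1 : ℕ) : ZMod (2 ^ n)) = 0 := by rw [h, ZMod.natCast_self]
    push_cast at hzero
    exact eq_neg_of_add_eq_zero_left hzero
  have hord : orderOf (q : ZMod (2 ^ n)) = 2 := by
    rw [← ZMod.orderOf_natCast_pow_of_odd hodd hm, hneg, orderOf_neg_one, ZMod.ringChar_zmod_n,
      if_neg h2n.ne']
  refine ⟨hord, (ZMod.natCast_eq_natCast_iff _ _ _).mp ?_⟩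
  simpa [hord] using pow_orderOf_eq_one (q : ZMod (2 ^ n))

theorem order_two_of_mersenne_power (q m n : ℕ) (hq : q.Prime) (hodd : Odd q)
    (hn : 2 ≤ n) (hm : 1 ≤ m) (h : q ^ m + 1 = 2 ^ n) :
    orderOf (q : ZMod (2 ^ n)) = 2 ∧ q ^ 2 ≡ 1 [MOD 2 ^ n] :=
  order_two_of_mersenne_power_general q m n hodd hn h
end

section
/- The only solutions u ∈ ℤ[1/2]^× of the 2-unit equation, i.e., u with 1 - u also in ℤ[1/2]^×, are u ∈ {2, -1, 1/2}. -/
/-!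
Write `u = ±2^a` and `1 - u = ±2^b`. The sign pattern `(-, -)` is impossible, `(+, +)` gives
`2^a + 2^b = 1`, and the mixed patterns give `2^a - 2^b = 1` up to swapping `u` and `1 - u`.
Scaling by `2^(-a)` turns `2^a + 2^b = 1` into `2^(-a) - 2^(b-a) = 1`, so everything reduces to
`2^a - 2^b = 1`. There `2^a > 1` forces `a ≥ 1`, hence `2^b ≥ 1` and `b ≥ 0`; in `ℕ` parity then
leaves only `2^1 - 2^0 = 1`.
-/

/-- `u` is a unit of `ℤ[1/2]`, i.e. of the form `± 2^a` with `a : ℤ`. -/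
def IsTwoUnit (u : ℚ) : Prop :=
  ∃ (ε : ℚ) (a : ℤ), (ε = 1 ∨ ε = -1) ∧ u = ε * (2 : ℚ) ^ a

lemma Nat.two_pow_eq_two_pow_add_one {m n : ℕ} (h : 2 ^ m = 2 ^ n + 1) : m = 1 ∧ n = 0 := by
  rcases n with _ | n
  · exact ⟨Nat.pow_right_injective le_rfl (by simpa using h), rfl⟩
  · rcases m with _ | m
    · simp at h
    · rw [pow_succ, pow_succ] at h
      omega

lemma two_zpow_sub_two_zpow_eq_one {a b : ℤ} (h : (2 : ℚ) ^ a - 2 ^ b = 1) :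
    a = 1 ∧ b = 0 := by
  have ha : 0 < a := by
    rw [← one_lt_zpow_iff_right₀ (one_lt_two : (1 : ℚ) < 2)]
    linarith [zpow_pos two_pos b (G₀ := ℚ)]
  lift a to ℕ using ha.le
  rw [zpow_natCast] at h
  have hb : 0 ≤ b := by
    rw [← one_le_zpow_iff_right₀ (one_lt_two : (1 : ℚ) < 2)]
    linarith [le_self_pow₀ one_le_two (by omega : a ≠ 0) (M₀ := ℚ)]
  lift b to ℕ using hb
  rw [zpow_natCast] at h
  have h' : 2 ^ a = 2 ^ b + 1 := by exact_mod_cast (by linarith : (2 : ℚ) ^ a = 2 ^ b + 1)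
  exact_mod_cast Nat.two_pow_eq_two_pow_add_one h'

lemma two_zpow_add_two_zpow_eq_one {a b : ℤ} (h : (2 : ℚ) ^ a + 2 ^ b = 1) :
    a = -1 ∧ b = -1 := by
  have h' : (2 : ℚ) ^ (-a) - 2 ^ (b - a) = 1 := by
    rw [zpow_neg, zpow_sub₀ two_ne_zero]
    field_simp
    linarith
  obtain ⟨h₁, h₂⟩ := two_zpow_sub_two_zpow_eq_one h'
  omega

theorem two_unit_equation_solutions (u : ℚ) :
    (IsTwoUnit u ∧ IsTwoUnit (1 - u)) ↔ (u = 2 ∨ u = -1 ∨ u = 1/2) := by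
  constructor
  · rintro ⟨⟨ε, a, hε, rfl⟩, δ, b, hδ, hv⟩
    rcases hε with rfl | rfl <;> rcases hδ with rfl | rfl
    · obtain ⟨rfl, -⟩ := two_zpow_add_two_zpow_eq_one (a := a) (b := b) (by linarith)
      norm_num
    · obtain ⟨rfl, -⟩ := two_zpow_sub_two_zpow_eq_one (a := a) (b := b) (by linarith)
      norm_num
    · obtain ⟨-, rfl⟩ := two_zpow_sub_two_zpow_eq_one (a := b) (b := a) (by linarith)
      norm_num
    · linarith [zpow_pos two_pos a (G₀ := ℚ), zpow_pos two_pos b (G₀ := ℚ)]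
  · rintro (rfl | rfl | rfl)
    · exact ⟨⟨1, 1, .inl rfl, by norm_num⟩, -1, 0, .inr rfl, by norm_num⟩
    · exact ⟨⟨-1, 0, .inr rfl, by norm_num⟩, 1, 1, .inl rfl, by norm_num⟩
    · exact ⟨⟨1, -1, .inl rfl, by norm_num⟩, 1, -1, .inl rfl, by norm_num⟩
end

section
/- For S = {2, 3}, the set of solutions u ∈ ℤ[1/6]^× with 1 - u ∈ ℤ[1/6]^× is exactly {-1, 1/2, 2, -2, -1/2, 1/3, 2/3, 3/2, 3, -3, -1/3, 1/4, 3/4, 4/3, 4, -8, -1/8, 1/9, 8/9, 9/8, 9}. -/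
/-- `u` is a unit of `ℤ[1/6]`, i.e. of the form `± 2^a 3^b` with `a b : ℤ`. -/
def IsSixUnit (u : ℚ) : Prop :=
  ∃ (ε : ℚ) (a b : ℤ), (ε = 1 ∨ ε = -1) ∧ u = ε * (2 : ℚ) ^ a * (3 : ℚ) ^ b

/-! Write `u = x / z` in lowest terms. Then `x + (z - x) = z` is a relation between pairwise
coprime integers of the form `±2^a 3^b`; moving the negative term across gives `p + q = r` with
`p, q, r` positive, pairwise coprime and 3-smooth. As 2 and 3 each divide at most one of them,
`p = 1` or `q = 1`, and `1 + q = r` becomes `3^b + 1 = 2^a` or `2^a + 1 = 3^b`, which congruences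
modulo 8, resp. 16 and 5, solve. The relations `1 + 1 = 2`, `1 + 2 = 3`, `1 + 3 = 4`,
`1 + 8 = 9`, read as `u = p / r`, `-p / q` or `r / p` for both orders of `p, q`, give the 21
values. -/

open Nat

namespace Nat

theorem three_pow_add_one_eq_two_pow {a b : ℕ} (h : 3 ^ b + 1 = 2 ^ a) :
    b = 0 ∧ a = 1 ∨ b = 1 ∧ a = 2 := by
  have ha : a < 3 := by
    by_contra! ha
    have h8 := congrArg (Nat.cast : ℕ → ZMod 8) h
    push_cast at h8
    rw [pow_eq_zero_of_le ha (by decide),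
      pow_eq_pow_mod b (by decide : (3 : ZMod 8) ^ 2 = 1)] at h8
    have : ∀ r < 2, (3 : ZMod 8) ^ r + 1 ≠ 0 := by decide
    exact this _ (b.mod_lt two_pos) h8
  have hb : b < 2 := by
    have : 2 ^ a ≤ 2 ^ 2 := Nat.pow_le_pow_right two_pos (by omega)
    exact (Nat.pow_lt_pow_iff_right (by norm_num)).1 (by omega : 3 ^ b < 3 ^ 2)
  interval_cases a <;> interval_cases b <;> simp_all

theorem two_pow_add_one_eq_three_pow {a b : ℕ} (h : 2 ^ a + 1 = 3 ^ b) :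
    a = 1 ∧ b = 1 ∨ a = 3 ∧ b = 2 := by
  have ha : a < 4 := by
    by_contra! ha
    have h16 := congrArg (Nat.cast : ℕ → ZMod 16) h
    have h5 := congrArg (Nat.cast : ℕ → ZMod 5) h
    push_cast at h16 h5
    -- `3 ^ b ≡ 1 [MOD 16]` forces `4 ∣ b`, so `3 ^ b ≡ 1 [MOD 5]`, but `5 ∤ 2 ^ a`
    rw [pow_eq_zero_of_le ha (by decide), zero_add,
      pow_eq_pow_mod b (by decide : (3 : ZMod 16) ^ 4 = 1)] at h16
    have hb : b % 4 = 0 := by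
      have : ∀ r < 4, 1 = (3 : ZMod 16) ^ r → r = 0 := by decide
      exact this _ (b.mod_lt (by norm_num)) h16
    rw [pow_eq_pow_mod b (by decide : (3 : ZMod 5) ^ 4 = 1), hb,
      pow_eq_pow_mod a (by decide : (2 : ZMod 5) ^ 4 = 1)] at h5
    have : ∀ r < 4, (2 : ZMod 5) ^ r + 1 ≠ 3 ^ 0 := by decide
    exact this _ (a.mod_lt (by norm_num)) h5
  have hb : b < 3 := by
    have : 2 ^ a ≤ 2 ^ 3 := Nat.pow_le_pow_right two_pos (by omega)
    exact (Nat.pow_lt_pow_iff_right (by norm_num)).1 (by omega : 3 ^ b < 3 ^ 3)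
  interval_cases a <;> interval_cases b <;> simp_all

theorem eq_two_or_eq_three_of_mem_smoothNumbers_four {n ℓ : ℕ}
    (hn : n ∈ smoothNumbers 4) (hℓ : ℓ.Prime) (hdvd : ℓ ∣ n) : ℓ = 2 ∨ ℓ = 3 := by
  have := mem_smoothNumbers'.1 hn ℓ hℓ hdvd
  interval_cases ℓ <;> first | omega | exact absurd hℓ (by norm_num)

theorem mem_smoothNumbers_four_iff {n : ℕ} :
    n ∈ smoothNumbers 4 ↔ ∃ a b : ℕ, n = 2 ^ a * 3 ^ b := by
  constructor
  · intro hn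
    obtain ⟨a, m, hm2, rfl⟩ :=
      exists_eq_pow_mul_and_not_dvd (ne_zero_of_mem_smoothNumbers hn) 2 (by norm_num)
    have hm : m ∈ smoothNumbers 4 := mem_smoothNumbers_of_dvd hn (dvd_mul_left m _)
    refine ⟨a, _, congrArg _ (eq_prime_pow_of_unique_prime_dvd (ne_zero_of_mem_smoothNumbers hm)
      fun hℓ hdvd => ?_)⟩
    rcases eq_two_or_eq_three_of_mem_smoothNumbers_four hm hℓ hdvd with rfl | rfl
    · exact absurd hdvd hm2
    · rfl
  · rintro ⟨a, b, rfl⟩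
    have h2 : 2 ^ a ∈ smoothNumbers 3 := by
      simpa using
        pow_mul_mem_smoothNumbers two_ne_zero a (mem_smoothNumbers_of_lt one_pos one_lt_two)
    rw [mul_comm]
    exact pow_mul_mem_smoothNumbers three_ne_zero b h2

theorem eq_one_of_not_two_dvd_of_not_three_dvd {n : ℕ} (hn : n ∈ smoothNumbers 4)
    (h2 : ¬2 ∣ n) (h3 : ¬3 ∣ n) : n = 1 :=
  eq_one_iff_not_exists_prime_dvd.2 fun _ hℓ hdvd => by
    rcases eq_two_or_eq_three_of_mem_smoothNumbers_four hn hℓ hdvd with rfl | rfl <;>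
      contradiction

theorem exists_eq_three_pow_of_not_two_dvd {n : ℕ} (hn : n ∈ smoothNumbers 4) (h2 : ¬2 ∣ n) :
    ∃ b, n = 3 ^ b := by
  obtain ⟨_ | a, b, rfl⟩ := mem_smoothNumbers_four_iff.1 hn
  · exact ⟨b, by simp⟩
  · exact absurd (dvd_mul_of_dvd_left (dvd_pow_self 2 (succ_ne_zero a)) _) h2

theorem exists_eq_two_pow_of_not_three_dvd {n : ℕ} (hn : n ∈ smoothNumbers 4) (h3 : ¬3 ∣ n) :
    ∃ a, n = 2 ^ a := by
  obtain ⟨a, _ | b, rfl⟩ := mem_smoothNumbers_four_iff.1 hn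
  · exact ⟨a, by simp⟩
  · exact absurd (dvd_mul_of_dvd_right (dvd_pow_self 3 (succ_ne_zero b)) _) h3

theorem eq_of_add_one_mem_smoothNumbers_four {q : ℕ} (hq : q ∈ smoothNumbers 4)
    (hq' : q + 1 ∈ smoothNumbers 4) : q = 1 ∨ q = 2 ∨ q = 3 ∨ q = 8 := by
  have h2 : ¬2 ∣ q ∨ ¬2 ∣ q + 1 := by omega
  have h3 : ¬3 ∣ q ∨ ¬3 ∣ q + 1 := by omega
  rcases h2 with h2 | h2 <;> rcases h3 with h3 | h3
  · exact Or.inl (eq_one_of_not_two_dvd_of_not_three_dvd hq h2 h3)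
  · obtain ⟨b, rfl⟩ := exists_eq_three_pow_of_not_two_dvd hq h2
    obtain ⟨a, ha⟩ := exists_eq_two_pow_of_not_three_dvd hq' h3
    rcases three_pow_add_one_eq_two_pow ha with ⟨rfl, -⟩ | ⟨rfl, -⟩ <;> simp
  · obtain ⟨a, rfl⟩ := exists_eq_two_pow_of_not_three_dvd hq h3
    obtain ⟨b, hb⟩ := exists_eq_three_pow_of_not_two_dvd hq' h2
    rcases two_pow_add_one_eq_three_pow hb with ⟨rfl, -⟩ | ⟨rfl, -⟩ <;> simp
  · have := eq_one_of_not_two_dvd_of_not_three_dvd hq' h2 h3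
    exact absurd (by omega) (ne_zero_of_mem_smoothNumbers hq)

theorem eq_one_or_eq_one_of_coprime_add_mem_smoothNumbers_four {p q : ℕ}
    (hp : p ∈ smoothNumbers 4) (hq : q ∈ smoothNumbers 4) (hpq : p + q ∈ smoothNumbers 4)
    (hcop : Coprime p q) : p = 1 ∨ q = 1 := by
  have prime_factor : ∀ {n}, n ∈ smoothNumbers 4 → n ≠ 1 → ∃ ℓ, (ℓ = 2 ∨ ℓ = 3) ∧ ℓ ∣ n :=
    fun hn h1 => ⟨_, eq_two_or_eq_three_of_mem_smoothNumbers_four hn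
      (minFac_prime h1) (minFac_dvd _), minFac_dvd _⟩
  have not_common : ∀ ℓ, (ℓ = 2 ∨ ℓ = 3) → ℓ ∣ p → ¬ℓ ∣ q := fun ℓ hℓ hp hq => by
    have := eq_one_of_dvd_one (hcop.gcd_eq_one ▸ dvd_gcd hp hq)
    omega
  by_contra! h
  obtain ⟨ℓp, hℓp, hdp⟩ := prime_factor hp h.1
  obtain ⟨ℓq, hℓq, hdq⟩ := prime_factor hq h.2
  obtain ⟨ℓr, hℓr, hdr⟩ := prime_factor hpq (by
    have := ne_zero_of_mem_smoothNumbers hp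
    have := ne_zero_of_mem_smoothNumbers hq
    omega)
  have : ℓp ≠ ℓq := by rintro rfl; exact not_common ℓp hℓp hdp hdq
  have : ℓr ≠ ℓp := by rintro rfl; exact not_common ℓr hℓr hdp ((Nat.dvd_add_right hdp).1 hdr)
  have : ℓr ≠ ℓq := by rintro rfl; exact not_common ℓr hℓr ((Nat.dvd_add_left hdq).1 hdr) hdq
  omega

end Nat

def smoothSumPairs : Finset (ℕ × ℕ) := {(1, 1), (1, 2), (2, 1), (1, 3), (3, 1), (1, 8), (8, 1)}

theorem mem_smoothSumPairs_iff {p q : ℕ} :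
    (p, q) ∈ smoothSumPairs ↔ p ∈ smoothNumbers 4 ∧ q ∈ smoothNumbers 4 ∧
      p + q ∈ smoothNumbers 4 ∧ Coprime p q := by
  constructor
  · intro h
    simp only [smoothSumPairs, Finset.mem_insert, Finset.mem_singleton, Prod.mk.injEq] at h
    rcases h with ⟨rfl, rfl⟩ | ⟨rfl, rfl⟩ | ⟨rfl, rfl⟩ | ⟨rfl, rfl⟩ | ⟨rfl, rfl⟩ | ⟨rfl, rfl⟩ |
      ⟨rfl, rfl⟩ <;> simp [mem_smoothNumbers]
  · rintro ⟨hp, hq, hpq, hcop⟩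
    rcases eq_one_or_eq_one_of_coprime_add_mem_smoothNumbers_four hp hq hpq hcop with rfl | rfl
    · rcases eq_of_add_one_mem_smoothNumbers_four hq (by rwa [add_comm]) with
        rfl | rfl | rfl | rfl <;> decide
    · rcases eq_of_add_one_mem_smoothNumbers_four hp hpq with rfl | rfl | rfl | rfl <;> decide

theorem isSixUnit_iff_exists_div {u : ℚ} :
    IsSixUnit u ↔ ∃ (ε : ℚ) (m n : ℕ), (ε = 1 ∨ ε = -1) ∧ m ∈ smoothNumbers 4 ∧
      n ∈ smoothNumbers 4 ∧ u = ε * (m / n) := by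
  constructor
  · rintro ⟨ε, a, b, hε, rfl⟩
    refine ⟨ε, 2 ^ a.toNat * 3 ^ b.toNat, 2 ^ (-a).toNat * 3 ^ (-b).toNat, hε,
      mem_smoothNumbers_four_iff.2 ⟨_, _, rfl⟩, mem_smoothNumbers_four_iff.2 ⟨_, _, rfl⟩, ?_⟩
    conv_lhs => rw [← Int.toNat_sub_toNat_neg a, ← Int.toNat_sub_toNat_neg b]
    rw [zpow_sub₀ two_ne_zero, zpow_sub₀ three_ne_zero]
    push_cast
    simp only [zpow_natCast]
    ring
  · rintro ⟨ε, m, n, hε, hm, hn, rfl⟩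
    obtain ⟨a, b, rfl⟩ := mem_smoothNumbers_four_iff.1 hm
    obtain ⟨c, d, rfl⟩ := mem_smoothNumbers_four_iff.1 hn
    refine ⟨ε, (a : ℤ) - c, (b : ℤ) - d, hε, ?_⟩
    rw [zpow_sub₀ two_ne_zero, zpow_sub₀ three_ne_zero]
    push_cast
    simp only [zpow_natCast]
    ring

theorem isSixUnit_natCast_div {m n : ℕ} (hm : m ∈ smoothNumbers 4) (hn : n ∈ smoothNumbers 4) :
    IsSixUnit (m / n) :=
  isSixUnit_iff_exists_div.2 ⟨1, m, n, Or.inl rfl, hm, hn, (one_mul _).symm⟩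

theorem IsSixUnit.neg {u : ℚ} (h : IsSixUnit u) : IsSixUnit (-u) := by
  obtain ⟨ε, a, b, hε, rfl⟩ := h
  exact ⟨-ε, a, b, by rcases hε with rfl | rfl <;> norm_num, by ring⟩

theorem IsSixUnit.num_den_mem_smoothNumbers_four {u : ℚ} (h : IsSixUnit u) :
    u.num.natAbs ∈ smoothNumbers 4 ∧ u.den ∈ smoothNumbers 4 := by
  obtain ⟨ε, m, n, hε, hm, hn, rfl⟩ := isSixUnit_iff_exists_div.1 h
  have hn0 : (n : ℤ) ≠ 0 := by exact_mod_cast ne_zero_of_mem_smoothNumbers hn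
  have hdiv : (m / n : ℚ) = Rat.divInt m n := by rw [Rat.divInt_eq_div]; push_cast; rfl
  have hnum : (m / n : ℚ).num.natAbs ∈ smoothNumbers 4 :=
    mem_smoothNumbers_of_dvd hm (Int.natAbs_dvd_natAbs.2 (hdiv ▸ Rat.num_dvd m hn0))
  have hden : (m / n : ℚ).den ∈ smoothNumbers 4 :=
    mem_smoothNumbers_of_dvd hn (Int.natCast_dvd_natCast.1 (hdiv ▸ Rat.den_dvd m n))
  rcases hε with rfl | rfl
  · simpa using ⟨hnum, hden⟩
  · simpa [Rat.num_neg_eq_neg_num, Rat.den_neg_eq_den] using ⟨hnum, hden⟩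

theorem Rat.num_one_sub (u : ℚ) : (1 - u).num = u.den - u.num := by
  have hden : (1 - u).den = u.den := by exact_mod_cast Rat.natCast_sub_den 1 u
  have := Rat.mul_den_eq_num (1 - u)
  rw [hden, sub_mul, one_mul, Rat.mul_den_eq_num] at this
  exact_mod_cast this.symm

theorem exists_coprime_add_of_natAbs_mem_smoothNumbers_four {x : ℤ} {z : ℕ}
    (hx : x.natAbs ∈ smoothNumbers 4) (hz : z ∈ smoothNumbers 4)
    (hy : (z - x).natAbs ∈ smoothNumbers 4) (hcop : Coprime x.natAbs z) :
    ∃ p q : ℕ, p ∈ smoothNumbers 4 ∧ q ∈ smoothNumbers 4 ∧ p + q ∈ smoothNumbers 4 ∧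
      Coprime p q ∧
        ((x / z : ℚ) = p / (p + q) ∨ (x / z : ℚ) = -p / q ∨ (x / z : ℚ) = (p + q) / p) := by
  have hx0 := ne_zero_of_mem_smoothNumbers hx
  have hy0 := ne_zero_of_mem_smoothNumbers hy
  rcases lt_or_gt_of_ne (Int.natAbs_ne_zero.1 hx0) with hneg | hpos
  · obtain ⟨k, rfl⟩ := Int.exists_eq_neg_ofNat hneg.le
    refine ⟨k, z, by simpa using hx, hz, by rwa [show (z - -k : ℤ).natAbs = k + z by omega] at hy,
      by simpa using hcop, Or.inr (Or.inl ?_)⟩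
    push_cast
    ring
  lift x to ℕ using hpos.le
  rcases lt_or_gt_of_ne (show x ≠ z by omega) with hlt | hgt
  · refine ⟨x, z - x, hx, by rwa [show (z - x : ℤ).natAbs = z - x by omega] at hy,
      by rwa [Nat.add_sub_cancel' hlt.le], (coprime_sub_self_right hlt.le).2 hcop, Or.inl ?_⟩
    rw [Nat.cast_sub hlt.le]
    push_cast
    ring
  · refine ⟨z, x - z, hz, by rwa [show (z - x : ℤ).natAbs = x - z by omega] at hy,
      by rwa [Nat.add_sub_cancel' hgt.le], (coprime_sub_self_right hgt.le).2 hcop.symm,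
      Or.inr (Or.inr ?_)⟩
    rw [Nat.cast_sub hgt.le]
    push_cast
    ring

theorem exists_coprime_add_of_isSixUnit_of_isSixUnit_one_sub {u : ℚ} (hu : IsSixUnit u)
    (hv : IsSixUnit (1 - u)) :
    ∃ p q : ℕ, p ∈ smoothNumbers 4 ∧ q ∈ smoothNumbers 4 ∧ p + q ∈ smoothNumbers 4 ∧
      Coprime p q ∧ (u = p / (p + q) ∨ u = -p / q ∨ u = (p + q) / p) := by
  obtain ⟨hx, hz⟩ := hu.num_den_mem_smoothNumbers_four
  have hy := hv.num_den_mem_smoothNumbers_four.1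
  rw [Rat.num_one_sub] at hy
  rw [← Rat.num_div_den u]
  exact exists_coprime_add_of_natAbs_mem_smoothNumbers_four hx hz hy u.reduced

theorem isSixUnit_and_isSixUnit_one_sub_of_add {p q : ℕ} {u : ℚ} (hp : p ∈ smoothNumbers 4)
    (hq : q ∈ smoothNumbers 4) (hpq : p + q ∈ smoothNumbers 4)
    (hu : u = p / (p + q) ∨ u = -p / q ∨ u = (p + q) / p) :
    IsSixUnit u ∧ IsSixUnit (1 - u) := by
  have hp0 : (p : ℚ) ≠ 0 := by exact_mod_cast ne_zero_of_mem_smoothNumbers hp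
  have hq0 : (q : ℚ) ≠ 0 := by exact_mod_cast ne_zero_of_mem_smoothNumbers hq
  have hpq0 : (p + q : ℚ) ≠ 0 := by exact_mod_cast ne_zero_of_mem_smoothNumbers hpq
  rcases hu with rfl | rfl | rfl
  · refine ⟨by simpa using isSixUnit_natCast_div hp hpq, ?_⟩
    rw [show 1 - p / (p + q : ℚ) = q / (p + q) by field_simp; ring]
    simpa using isSixUnit_natCast_div hq hpq
  · refine ⟨by simpa [neg_div] using (isSixUnit_natCast_div hp hq).neg, ?_⟩
    rw [show 1 - -p / (q : ℚ) = (p + q) / q by field_simp; ring]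
    simpa using isSixUnit_natCast_div hpq hq
  · refine ⟨by simpa using isSixUnit_natCast_div hpq hp, ?_⟩
    rw [show 1 - (p + q : ℚ) / p = -(q / p) by field_simp; ring]
    exact (isSixUnit_natCast_div hq hp).neg

theorem isSixUnit_and_isSixUnit_one_sub_iff {u : ℚ} :
    IsSixUnit u ∧ IsSixUnit (1 - u) ↔ ∃ pq ∈ smoothSumPairs,
      u = pq.1 / (pq.1 + pq.2) ∨ u = -pq.1 / pq.2 ∨ u = (pq.1 + pq.2) / pq.1 := by
  constructor
  · rintro ⟨hu, hv⟩
    obtain ⟨p, q, hp, hq, hpq, hcop, hu⟩ :=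
      exists_coprime_add_of_isSixUnit_of_isSixUnit_one_sub hu hv
    exact ⟨(p, q), mem_smoothSumPairs_iff.2 ⟨hp, hq, hpq, hcop⟩, hu⟩
  · rintro ⟨⟨p, q⟩, hpq, hu⟩
    obtain ⟨hp, hq, hpq, -⟩ := mem_smoothSumPairs_iff.1 hpq
    exact isSixUnit_and_isSixUnit_one_sub_of_add hp hq hpq hu

theorem S_unit_solutions_two_three (u : ℚ) :
    (IsSixUnit u ∧ IsSixUnit (1 - u)) ↔
      u ∈ ({-1, 1/2, 2, -2, -1/2, 1/3, 2/3, 3/2, 3, -3, -1/3, 1/4, 3/4, 4/3, 4,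
            -8, -1/8, 1/9, 8/9, 9/8, 9} : Set ℚ) := by
  rw [isSixUnit_and_isSixUnit_one_sub_iff]
  simp only [smoothSumPairs, Finset.exists_mem_insert]
  norm_num
  simp only [or_comm, _root_.or_left_comm, or_assoc]
end
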